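/- arXiv:math/0611434 — 4 statements merged into one kernel-verified Lean document; each statement's English description precedes it below -/
import Mathlib

section
/- If H is an abelian subgroup of the group of orientation-preserving homeomorphisms of S¹, then the rotation number map Rot: H → ℝ/ℤ is a group homomorphism. -/
noncomputable section

/-- The circle `S¹ = ℝ/ℤ`. -/
abbrev S1 := AddCircle (1 : ℝ)
/-- The group of self-homeomorphisms of a topological space, under composition. -/
instance homeoGroup {X : Type*} [TopologicalSpace X] : Group (Homeomorph X X) where
  mul f g := g.trans f
  one := Homeomorph.refl X
  inv f := f.symm
  mul_assoc _ _ _ := rfl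
  one_mul f := Homeomorph.ext fun _ => rfl
  mul_one f := Homeomorph.ext fun _ => rfl
  inv_mul_cancel f := Homeomorph.ext fun x => f.symm_apply_apply x

/-- `F` is a lift of the circle homeomorphism `f`. -/
def IsLiftOf (f : Homeomorph S1 S1) (F : CircleDeg1Lift) : Prop :=
  ∀ x : ℝ, f ((x : ℝ) : S1) = ((F x : ℝ) : S1)

open scoped Classical

/-- The Poincaré rotation number of a circle homeomorphism, as an element of `ℝ mod 1`,
defined via the translation number of a chosen degree-one lift. -/
noncomputable def Rot (f : Homeomorph S1 S1) : S1 :=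
  if h : ∃ F : CircleDeg1Lift, IsLiftOf f F
  then ((h.choose.translationNumber : ℝ) : S1) else 0

/-!
Any two lifts of a circle homeomorphism differ by an integer translation, so `Rot f` is the
translation number `τ` of any lift of `f`, reduced mod 1. If `f` and `g` commute and `F`, `G`
lift them, then `F * G` and `G * F` both lift `f * g`, hence `F * G = T_n * G * F` for an integer
translation `T_n`. Thus `F` semiconjugates `G` to `T_n * G`, and comparing translation numbers
gives `τ G = τ G + n`, so `n = 0`: the lifts commute, and `τ` is additive on commuting lifts.
-/

open CircleDeg1Lift

theorem S1.coe_eq_coe_iff {x y : ℝ} : (x : S1) = y ↔ ∃ n : ℤ, x = y + n := by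
  rw [← sub_eq_zero, ← AddCircle.coe_sub, AddCircle.coe_eq_zero_iff]
  simp only [zsmul_eq_mul, mul_one, eq_comm, sub_eq_iff_eq_add']

theorem S1.coe_ne_coe_of_lt_of_lt_add_one {x y : ℝ} (hxy : x < y) (hyx : y < x + 1) :
    (x : S1) ≠ y := by
  rw [Ne, AddCircle.coe_eq_coe_iff_of_mem_Ico (a := x) ⟨le_rfl, by linarith⟩ ⟨hxy.le, hyx⟩]
  exact hxy.ne

theorem CircleDeg1Lift.translationNumber_eq_add_of_forall_eq_add_int {F G : CircleDeg1Lift}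
    {n : ℤ} (h : ∀ x, F x = G x + n) : translationNumber F = translationNumber G + n := by
  have hF : F = (translate (Multiplicative.ofAdd (n : ℝ)) : CircleDeg1Lift) * G :=
    ext fun x => by rw [h x, mul_apply, CircleDeg1Lift.translate_apply, add_comm]
  have hcomm : Commute (translate (Multiplicative.ofAdd (n : ℝ)) : CircleDeg1Lift) G :=
    ext fun x => by simp only [mul_apply, CircleDeg1Lift.translate_apply, map_int_add]
  rw [hF, translationNumber_mul_of_commute hcomm, translationNumber_translate, add_comm]

namespace IsLiftOf

variable {f g : Homeomorph S1 S1} {F G : CircleDeg1Lift}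

theorem map_mem_Ioo (hF : IsLiftOf f F) {x y : ℝ} (hxy : x < y) (hyx : y < x + 1) :
    F y ∈ Set.Ioo (F x) (F x + 1) := by
  have hne : ((F x : ℝ) : S1) ≠ F y := by
    rw [← hF, ← hF]
    exact f.injective.ne (S1.coe_ne_coe_of_lt_of_lt_add_one hxy hyx)
  refine ⟨(F.mono hxy.le).lt_of_ne fun h => hne (by rw [h]), ?_⟩
  refine ((F.mono hyx.le).trans_eq (F.map_add_one x)).lt_of_ne fun h => hne ?_
  exact (S1.coe_eq_coe_iff.2 ⟨1, by rw [h, Int.cast_one]⟩).symm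

theorem abs_sub_sub_lt_one (hF : IsLiftOf f F) (hG : IsLiftOf f G) {x y : ℝ}
    (h : |y - x| < 1) : |(F y - G y) - (F x - G x)| < 1 := by
  obtain ⟨h₁, h₂⟩ := abs_lt.1 h
  rcases lt_trichotomy x y with hxy | rfl | hyx
  · obtain ⟨hF₁, hF₂⟩ := hF.map_mem_Ioo hxy (by linarith)
    obtain ⟨hG₁, hG₂⟩ := hG.map_mem_Ioo hxy (by linarith)
    rw [abs_lt]
    constructor <;> linarith
  · simp
  · obtain ⟨hF₁, hF₂⟩ := hF.map_mem_Ioo hyx (by linarith)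
    obtain ⟨hG₁, hG₂⟩ := hG.map_mem_Ioo hyx (by linarith)
    rw [abs_lt]
    constructor <;> linarith

theorem exists_int_eq_add (hF : IsLiftOf f F) (hG : IsLiftOf f G) :
    ∃ n : ℤ, ∀ x, F x = G x + n := by
  choose d hd using fun x => S1.coe_eq_coe_iff.1 ((hF x).symm.trans (hG x))
  have hd_loc : IsLocallyConstant d := by
    rw [IsLocallyConstant.iff_eventually_eq]
    intro x
    filter_upwards [Metric.ball_mem_nhds x one_pos] with y hy
    have hlt : |((d y - d x : ℤ) : ℝ)| < 1 := by
      have := hF.abs_sub_sub_lt_one hG (by rwa [Metric.mem_ball, Real.dist_eq] at hy)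
      rwa [hd x, hd y, add_sub_cancel_left, add_sub_cancel_left, ← Int.cast_sub] at this
    exact sub_eq_zero.1 (Int.abs_lt_one_iff.1 (by exact_mod_cast hlt))
  exact ⟨d 0, fun x => by rw [hd x, hd_loc.apply_eq_of_preconnectedSpace x 0]⟩

theorem rot_eq (hF : IsLiftOf f F) : Rot f = translationNumber F := by
  have h : ∃ G, IsLiftOf f G := ⟨F, hF⟩
  obtain ⟨n, hn⟩ := h.choose_spec.exists_int_eq_add hF
  rw [Rot, dif_pos h, translationNumber_eq_add_of_forall_eq_add_int hn, S1.coe_eq_coe_iff]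
  exact ⟨n, rfl⟩

theorem mul (hF : IsLiftOf f F) (hG : IsLiftOf g G) : IsLiftOf (f * g) (F * G) :=
  fun x => (congrArg f (hG x)).trans (hF (G x))

theorem commute (hF : IsLiftOf f F) (hG : IsLiftOf g G) (hfg : f * g = g * f) :
    Commute F G := by
  obtain ⟨n, hn⟩ := (hF.mul hG).exists_int_eq_add (hfg ▸ hG.mul hF)
  set T : CircleDeg1Lift := translate (Multiplicative.ofAdd (n : ℝ))
  have hsemi : Function.Semiconj F G ⇑(T * G) := fun x => by
    rw [mul_apply, CircleDeg1Lift.translate_apply, add_comm, ← mul_apply, hn x, mul_apply]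
  have hτ : translationNumber G = translationNumber G + n :=
    (translationNumber_eq_of_semiconj hsemi).trans
      (translationNumber_eq_add_of_forall_eq_add_int fun x => by
        rw [mul_apply, CircleDeg1Lift.translate_apply, add_comm])
  have hn0 : (n : ℝ) = 0 := by linarith
  exact ext fun x => by rw [hn x, hn0, add_zero]

end IsLiftOf

/-- If `H` is an abelian subgroup of the group of orientation-preserving
homeomorphisms of `S¹` (i.e. each element admits a degree-one lift), then the
rotation number map is a homomorphism `H → ℝ mod 1`. -/
theorem rotation_number_hom_on_abelian (H : Subgroup (Homeomorph S1 S1))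
    (hop : ∀ f ∈ H, ∃ F : CircleDeg1Lift, IsLiftOf f F)
    (hab : ∀ f ∈ H, ∀ g ∈ H, f * g = g * f) :
    ∀ f ∈ H, ∀ g ∈ H, Rot (f * g) = Rot f + Rot g := by
  intro f hf g hg
  obtain ⟨F, hF⟩ := hop f hf
  obtain ⟨G, hG⟩ := hop g hg
  rw [(hF.mul hG).rot_eq, hF.rot_eq, hG.rot_eq,
    translationNumber_mul_of_commute (hF.commute hG (hab f hf g hg)), AddCircle.coe_add]
end
end

section
/- Let f and g be orientation-preserving homeomorphisms of S¹ each with nonempty fixed point set, such that Fix(f) ⊆ Supp(g) and Fix(g) ⊆ Supp(f). Then ⟨f, g⟩ contains a free subgroup of rank 2. -/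
/-!
`Fix f` and `Fix g` are disjoint compact sets, so they have disjoint open neighbourhoods `U` and
`V`. Lift `f` to `ℝ` so that the lift has fixed points. A point outside the fixed set lies in a
complementary interval on which the lift moves every point towards the same endpoint, so forward
and backward orbits converge to fixed points, locally uniformly; by compactness of `Uᶜ`, all large
powers `f ^ n` and `f⁻¹ ^ n` map `Uᶜ` into `U`, and likewise for `g` and `V`. Hence for suitable
`M` and `N` every nonzero power of `f ^ M` maps `V` into `U` and every nonzero power of `g ^ N`
maps `U` into `V`, and the ping-pong lemma makes them free generators.
-/

noncomputable section

/-- A circle homeomorphism is orientation preserving if it admits a continuous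
strictly monotone lift `F : ℝ → ℝ` commuting with the unit translation. -/
def IsOrientationPreserving (f : Homeomorph S1 S1) : Prop :=
  ∃ F : ℝ → ℝ, Continuous F ∧ StrictMono F ∧ (∀ x : ℝ, F (x + 1) = F x + 1) ∧
    ∀ x : ℝ, f (x : S1) = ((F x : ℝ) : S1)

/-- The support of a self-homeomorphism: the set of points it moves. -/
def Supp (f : Homeomorph S1 S1) : Set S1 := {x | f x ≠ x}

/-- The fixed-point set of a self-homeomorphism. -/
def FixSet (f : Homeomorph S1 S1) : Set S1 := {x | f x = x}

open Filter Topology Set Function Pointwise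

section Order

variable {α : Type*} [ConditionallyCompleteLinearOrder α] [TopologicalSpace α] [OrderTopology α]

theorem tendsto_iterate_of_lt_map {G : α → α} (hG : Monotone G) (hc : Continuous G) {y b : α}
    (hyb : y < b) (hb : G b = b) (hlt : ∀ z ∈ Ico y b, z < G z) :
    Tendsto (fun n => G^[n] y) atTop (𝓝 b) := by
  have hmono : Monotone fun n => G^[n] y :=
    hG.monotone_iterate_of_le_map (hlt y ⟨le_rfl, hyb⟩).le
  have hle : ∀ n, G^[n] y ≤ b := fun n => by
    simpa only [iterate_fixed hb n] using hG.iterate n hyb.le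
  have hbdd : BddAbove (range fun n => G^[n] y) := ⟨b, forall_mem_range.2 hle⟩
  have htend := tendsto_atTop_ciSup hmono hbdd
  have hfix : G (⨆ n, G^[n] y) = ⨆ n, G^[n] y :=
    isFixedPt_of_tendsto_iterate htend hc.continuousAt
  have hyL : y ≤ ⨆ n, G^[n] y := le_ciSup hbdd 0
  obtain hLb | hLb := (ciSup_le hle).lt_or_eq
  · exact absurd hfix (hlt _ ⟨hyL, hLb⟩).ne'
  · rwa [hLb] at htend

variable [DenselyOrdered α]

theorem eventually_iterate_mem_of_lt_map {G : α → α} (hG : Monotone G) (hc : Continuous G)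
    {O : Set α} (hO : IsOpen O) (hfix : ∀ z, G z = z → z ∈ O) {a x b : α} (hax : a ≤ x)
    (ha : G a = a) (hxb : x ≤ b) (hb : G b = b) (hx : x < G x) :
    ∀ᶠ p : ℕ × α in atTop ×ˢ 𝓝 x, G^[p.1] p.2 ∈ O := by
  have hF : IsClosed {z | G z = z} := isClosed_eq hc continuous_id
  have hbddA : BddAbove ({z | G z = z} ∩ Iic x) := ⟨x, fun _ h => h.2⟩
  have hbddB : BddBelow ({z | G z = z} ∩ Ici x) := ⟨x, fun _ h => h.2⟩
  -- `x` lies in the component `(a', b')` of the complement of the fixed set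
  set a' := sSup ({z | G z = z} ∩ Iic x)
  set b' := sInf ({z | G z = z} ∩ Ici x)
  obtain ⟨ha'F, ha'x⟩ : a' ∈ {z | G z = z} ∩ Iic x :=
    (hF.inter isClosed_Iic).csSup_mem ⟨a, ha, hax⟩ hbddA
  obtain ⟨hb'F, hxb'⟩ : b' ∈ {z | G z = z} ∩ Ici x :=
    (hF.inter isClosed_Ici).csInf_mem ⟨b, hb, hxb⟩ hbddB
  replace ha'x : a' < x := ha'x.lt_of_ne fun h => hx.ne' (h ▸ ha'F)
  replace hxb' : x < b' := hxb'.lt_of_ne fun h => hx.ne' (h.symm ▸ hb'F)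
  have hlt : ∀ z ∈ Ioo a' b', z < G z := by
    intro z hz
    by_contra! hzG
    obtain ⟨w, hw, hGw⟩ := isPreconnected_Ioo.intermediate_value₂ hz ⟨ha'x, hxb'⟩
      hc.continuousOn continuousOn_id hzG hx.le
    rcases le_total w x with hwx | hxw
    · exact (le_csSup hbddA ⟨hGw, hwx⟩).not_gt hw.1
    · exact (csInf_le hbddB ⟨hGw, hxw⟩).not_gt hw.2
  obtain ⟨y, ha'y, hyx⟩ := exists_between ha'x
  have htend := tendsto_iterate_of_lt_map hG hc (hyx.trans hxb') hb'F
    fun z hz => hlt z ⟨ha'y.trans_le hz.1, hz.2⟩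
  obtain ⟨l, hlb, hlO⟩ := exists_Ioc_subset_of_mem_nhds (hO.mem_nhds (hfix _ hb'F))
    ⟨y, hyx.trans hxb'⟩
  filter_upwards [(htend.eventually (lt_mem_nhds hlb)).prod_mk (Icc_mem_nhds hyx hxb')]
    with ⟨n, w⟩ ⟨hn, hw⟩
  exact hlO ⟨hn.trans_le (hG.iterate n hw.1),
    (hG.iterate n hw.2).trans_eq (iterate_fixed hb'F n)⟩

theorem eventually_iterate_mem_of_map_ne {G : α → α} (hG : Monotone G) (hc : Continuous G)
    {O : Set α} (hO : IsOpen O) (hfix : ∀ z, G z = z → z ∈ O) {a x b : α} (hax : a ≤ x)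
    (ha : G a = a) (hxb : x ≤ b) (hb : G b = b) (hx : G x ≠ x) :
    ∀ᶠ p : ℕ × α in atTop ×ˢ 𝓝 x, G^[p.1] p.2 ∈ O := by
  obtain hlt | hgt := hx.lt_or_gt
  · exact eventually_iterate_mem_of_lt_map (α := αᵒᵈ) hG.dual hc hO hfix hxb hb hax ha hlt
  · exact eventually_iterate_mem_of_lt_map hG hc hO hfix hax ha hxb hb hgt

end Order

theorem pairwise_fin_two {P : Fin 2 → Fin 2 → Prop} (h01 : P 0 1) (h10 : P 1 0) :
    Pairwise P := by
  intro i j hij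
  fin_cases i <;> fin_cases j <;> simp_all

theorem FreeGroup.injective_lift_of_zpow_smul_subset {ι G α : Type*} [Nontrivial ι] [Group G]
    [MulAction G α] (a : ι → G) (X : ι → Set α) (hX : ∀ i, (X i).Nonempty)
    (hXdisj : Pairwise (Disjoint on X))
    (hpp : Pairwise fun i j => ∀ n : ℤ, n ≠ 0 → a i ^ n • X j ⊆ X i) :
    Injective (FreeGroup.lift a) := by
  have hlift : FreeGroup.lift a =
      (Monoid.CoprodI.lift fun i => FreeGroup.lift fun _ => a i).comp
        (freeGroupEquivCoprodI (ι := ι)).toMonoidHom := by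
    ext i
    simp
  rw [hlift, MonoidHom.coe_comp]
  refine Injective.comp (Monoid.CoprodI.lift_injective_of_ping_pong _ ?_ X hX hXdisj ?_)
    freeGroupEquivCoprodI.injective
  · obtain ⟨i⟩ := ‹Nontrivial ι›.to_nonempty
    right
    refine ⟨i, ?_⟩
    rw [FreeGroup.freeGroupUnitEquivInt.cardinal_eq, Cardinal.mk_denumerable]
    exact Cardinal.natCast_le_aleph0
  · intro i j hij w hw
    obtain ⟨n, rfl⟩ := FreeGroup.freeGroupUnitEquivInt.symm.surjective w
    have hn : n ≠ 0 := by rintro rfl; exact hw rfl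
    simpa [FreeGroup.freeGroupUnitEquivInt] using hpp hij n hn

theorem exists_zpow_pow_smul_subset {G α : Type*} [Group G] [MulAction G α] {a : G}
    {S T : Set α} (h : ∀ᶠ n in atTop, a ^ n • S ⊆ T ∧ a⁻¹ ^ n • S ⊆ T) :
    ∃ N : ℕ, ∀ k : ℤ, k ≠ 0 → (a ^ N) ^ k • S ⊆ T := by
  obtain ⟨N, hN⟩ := eventually_atTop.1 h
  refine ⟨N + 1, fun k hk => ?_⟩
  obtain ⟨m, hkm⟩ := k.eq_nat_or_neg
  have hNm : N ≤ (N + 1) * m := by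
    have hm : m ≠ 0 := by rintro rfl; rcases hkm with rfl | rfl <;> exact hk rfl
    nlinarith [Nat.pos_of_ne_zero hm]
  rcases hkm with rfl | rfl
  · rw [zpow_natCast, ← pow_mul]
    exact (hN _ hNm).1
  · rw [zpow_neg, zpow_natCast, ← pow_mul, ← inv_pow]
    exact (hN _ hNm).2

instance homeoMulAction {X : Type*} [TopologicalSpace X] : MulAction (Homeomorph X X) X where
  smul f x := f x
  one_smul _ := rfl
  mul_smul _ _ _ := rfl

theorem homeo_pow_apply {X : Type*} [TopologicalSpace X] (f : Homeomorph X X) (n : ℕ)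
    (x : X) : (f ^ n) x = f^[n] x := by
  induction n with
  | zero => rfl
  | succ n ih => rw [pow_succ', iterate_succ_apply', ← ih]; rfl

theorem fixSet_inv (f : Homeomorph S1 S1) : FixSet f⁻¹ = FixSet f := by
  ext x
  change f.symm x = x ↔ f x = x
  exact f.symm_apply_eq.trans eq_comm

theorem IsOrientationPreserving.inv {f : Homeomorph S1 S1} (hf : IsOrientationPreserving f) :
    IsOrientationPreserving f⁻¹ := by
  obtain ⟨F, hc, hm, hper, hlift⟩ := hf
  have hsurj : Surjective F :=
    (CircleDeg1Lift.continuous_iff_surjective ⟨⟨F, hm.monotone⟩, hper⟩).1 hc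
  set e := hm.orderIsoOfSurjective F hsurj
  have he : ∀ x, F (e.symm x) = x := e.apply_symm_apply
  refine ⟨e.symm, e.symm.continuous, e.symm.strictMono, fun x => ?_, fun x => ?_⟩
  · rw [e.symm_apply_eq]
    change x + 1 = F (e.symm x + 1)
    rw [hper, he]
  · change f.symm x = _
    rw [f.symm_apply_eq, hlift, he]

theorem IsOrientationPreserving.exists_lift_fixed {f : Homeomorph S1 S1}
    (hf : IsOrientationPreserving f) (hfix : (FixSet f).Nonempty) :
    ∃ G : CircleDeg1Lift, Continuous G ∧ (∀ x : ℝ, f x = G x) ∧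
      ∃ x₀, G x₀ = x₀ := by
  obtain ⟨F, hc, hm, hper, hlift⟩ := hf
  obtain ⟨p, hp⟩ := hfix
  obtain ⟨x₀, rfl⟩ := QuotientAddGroup.mk_surjective p
  have hcoe_int : ∀ n : ℤ, ((n : ℝ) : S1) = 0 := fun n =>
    (AddCircle.coe_eq_zero_iff 1).2 ⟨n, by simp⟩
  obtain ⟨n, hn⟩ : ∃ n : ℤ, F x₀ - x₀ = n := by
    have : ((F x₀ - x₀ : ℝ) : S1) = 0 := by
      rw [AddCircle.coe_sub, ← hlift, sub_eq_zero]; exact hp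
    obtain ⟨n, hn⟩ := (AddCircle.coe_eq_zero_iff 1).1 this
    exact ⟨n, by simpa using hn.symm⟩
  refine ⟨⟨⟨fun x => F x - n, fun x y h => sub_le_sub_right (hm.monotone h) _⟩,
    fun x => by simp [hper]; ring⟩, hc.sub continuous_const, fun x => ?_, x₀, ?_⟩
  · change f x = ((F x - n : ℝ) : S1)
    rw [hlift, AddCircle.coe_sub, hcoe_int, sub_zero]
  · change F x₀ - n = x₀
    linarith

theorem eventually_pow_smul_compl_subset {f : Homeomorph S1 S1} (hf : IsOrientationPreserving f)
    (hfix : (FixSet f).Nonempty) {U : Set S1} (hU : IsOpen U) (hFU : FixSet f ⊆ U) :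
    ∀ᶠ n : ℕ in atTop, (f ^ n) • Uᶜ ⊆ U := by
  obtain ⟨G, hc, hlift, x₀, hx₀⟩ := hf.exists_lift_fixed hfix
  have hiter : ∀ n (x : ℝ), (f ^ n) (x : S1) = ((G^[n] x : ℝ) : S1) := by
    intro n x
    rw [homeo_pow_apply]
    exact (Semiconj.iterate_right (fun y => (hlift y).symm) n x).symm
  have hfixG : ∀ z : ℝ, G z = z → (z : S1) ∈ U := fun z hz =>
    hFU (show f z = z by rw [hlift, hz])
  have hZ : ∀ n : ℤ, G (x₀ + n) = x₀ + n := fun n => by rw [G.map_add_int, hx₀]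
  have hlocal : ∀ s ∈ Uᶜ, {p : ℕ × S1 | (f ^ p.1) p.2 ∈ U} ∈ atTop ×ˢ 𝓝 s := by
    intro s hs
    obtain ⟨x, rfl⟩ := QuotientAddGroup.mk_surjective s
    rw [QuotientAddGroup.nhds_eq, ← map_id (f := atTop), prod_map_map_eq']
    have := eventually_iterate_mem_of_map_ne G.monotone hc
      (hU.preimage QuotientAddGroup.continuous_mk) hfixG
      (a := x₀ + ⌊x - x₀⌋) (b := x₀ + ⌈x - x₀⌉)
      (by linarith [Int.floor_le (x - x₀)]) (hZ _) (by linarith [Int.le_ceil (x - x₀)]) (hZ _)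
      (fun h => hs (hfixG x h))
    refine mem_map.2 ?_
    filter_upwards [this] with p hp
    simpa [hiter] using hp
  have hglobal := hU.isClosed_compl.isCompact.mem_prod_nhdsSet_of_forall hlocal
  filter_upwards [eventually_prod_principal_iff.1 (prod_mono le_rfl principal_le_nhdsSet hglobal)]
    with n hn
  rintro _ ⟨x, hx, rfl⟩
  exact hn x hx

theorem exists_zpow_pow_smul_compl_subset {f : Homeomorph S1 S1}
    (hf : IsOrientationPreserving f) (hfix : (FixSet f).Nonempty) {U : Set S1} (hU : IsOpen U)
    (hFU : FixSet f ⊆ U) : ∃ N : ℕ, ∀ k : ℤ, k ≠ 0 → (f ^ N) ^ k • Uᶜ ⊆ U :=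
  exists_zpow_pow_smul_subset <| (eventually_pow_smul_compl_subset hf hfix hU hFU).and <|
    eventually_pow_smul_compl_subset hf.inv (fixSet_inv f ▸ hfix) hU (fixSet_inv f ▸ hFU)

theorem free_subgroup_of_crossed_fixed_sets_general (f g : Homeomorph S1 S1)
    (hf : IsOrientationPreserving f) (hg : IsOrientationPreserving g)
    (hfne : (FixSet f).Nonempty) (hgne : (FixSet g).Nonempty)
    (hfg : FixSet f ⊆ Supp g) :
    ∃ φ : FreeGroup (Fin 2) →* Homeomorph S1 S1,
      Function.Injective φ ∧ ∀ w : FreeGroup (Fin 2),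
        φ w ∈ Subgroup.closure {f, g} := by
  obtain ⟨U, V, hU, hV, hfU, hgV, hUV⟩ :=
    SeparatedNhds.of_isCompact_isClosed (isClosed_eq f.continuous continuous_id).isCompact
      (isClosed_eq g.continuous continuous_id) (disjoint_left.2 fun _ hxf hxg => hfg hxf hxg)
  obtain ⟨M, hM⟩ := exists_zpow_pow_smul_compl_subset hf hfne hU hfU
  obtain ⟨N, hN⟩ := exists_zpow_pow_smul_compl_subset hg hgne hV hgV
  refine ⟨FreeGroup.lift ![f ^ M, g ^ N], FreeGroup.injective_lift_of_zpow_smul_subset _ ![U, V]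
    (Fin.forall_fin_two.2 ⟨hfne.mono hfU, hgne.mono hgV⟩) (pairwise_fin_two hUV hUV.symm)
    (pairwise_fin_two (fun n hn => (smul_set_mono hUV.subset_compl_left).trans (hM n hn))
      fun n hn => (smul_set_mono hUV.subset_compl_right).trans (hN n hn)), fun w => ?_⟩
  refine FreeGroup.range_lift_le (range_subset_iff.2 (Fin.forall_fin_two.2 ⟨?_, ?_⟩))
    ⟨w, rfl⟩
  · exact pow_mem (Subgroup.subset_closure (by simp)) M
  · exact pow_mem (Subgroup.subset_closure (by simp)) N

/-- If `f` and `g` are orientation-preserving homeomorphisms of `S¹` with nonempty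
fixed-point sets, the fixed set of each contained in the support of the other, then
`⟨f, g⟩` contains a free subgroup of rank 2. -/
theorem free_subgroup_of_crossed_fixed_sets (f g : Homeomorph S1 S1)
    (hf : IsOrientationPreserving f) (hg : IsOrientationPreserving g)
    (hfne : (FixSet f).Nonempty) (hgne : (FixSet g).Nonempty)
    (hfg : FixSet f ⊆ Supp g) (hgf : FixSet g ⊆ Supp f) :
    ∃ φ : FreeGroup (Fin 2) →* Homeomorph S1 S1,
      Function.Injective φ ∧ ∀ w : FreeGroup (Fin 2),
        φ w ∈ Subgroup.closure {f, g} :=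
  free_subgroup_of_crossed_fixed_sets_general f g hf hg hfne hgne hfg
end
end

section
/- In the restricted wreath product W = ℤ ≀ ℤ², with a = (0, (1,0)) and b = (0, (0,1)) generating the top group and c the base-group generator supported at index (0,0): the elements [c,a], a, and b generate a subgroup of W isomorphic to ℤ ≀ ℤ². -/
/-- The shift action of `T` on the restricted direct sum `⊕_{t ∈ T} ℤ`, as a
homomorphism to the automorphism group (multiplicative notation). -/
noncomputable def shiftAut (T : Type*) [AddCommGroup T] :
    Multiplicative T →* MulAut (Multiplicative (T →₀ ℤ)) :=
  MonoidHom.mk'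
    (fun r => AddEquiv.toMultiplicative (Finsupp.domCongr (Equiv.addRight r.toAdd)))
    (by
      intro a b
      ext f : 1
      refine Multiplicative.toAdd.injective (Finsupp.ext fun t => ?_)
      simp [Finsupp.domCongr, Finsupp.equivMapDomain, Equiv.Perm.mul_def, Equiv.trans_apply]
      congr 1
      abel)

/-- The standard restricted wreath product `ℤ ≀ T = (⊕_{t ∈ T} ℤ) ⋊ T`. -/
abbrev ZW (T : Type*) [AddCommGroup T] :=
  SemidirectProduct (Multiplicative (T →₀ ℤ)) (Multiplicative T) (shiftAut T)

/-- The restricted wreath product `ℤ ≀ (ℤ × ℤ)`. -/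
abbrev ZW2 := ZW (ℤ × ℤ)

/-- The generator `a = (0, (1,0))` of the top group of `ℤ ≀ ℤ²`. -/
noncomputable def genA : ZW2 := ⟨1, Multiplicative.ofAdd (1, 0)⟩

/-- The generator `b = (0, (0,1))` of the top group of `ℤ ≀ ℤ²`. -/
noncomputable def genB : ZW2 := ⟨1, Multiplicative.ofAdd (0, 1)⟩

/-- The base-group generator `c` supported at the index `(0,0)`. -/
noncomputable def genC : ZW2 := ⟨Multiplicative.ofAdd (Finsupp.single ((0 : ℤ), (0 : ℤ)) 1), 1⟩

/-!
The map `Φ` that fixes the top group and sends a base element `n` to the commutator `[n, a]` is an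
endomorphism of `ℤ ≀ ℤ²`, because base and top group are abelian. It is injective: a finitely
supported function invariant under the shift by `(1,0)` vanishes, since `(1,0)` has infinite
order. As `Φ` sends `c, a, b` to `[c,a], a, b` and `c, a, b` generate `ℤ ≀ ℤ²`, the subgroup
generated by `[c,a], a, b` is the image of `Φ`, a copy of `ℤ ≀ ℤ²`.
-/

open Multiplicative SemidirectProduct

theorem Finsupp.eq_zero_of_periodic {T M : Type*} [AddGroup T] [Zero M] {F : T →₀ M} {r : T}
    (hr : ¬IsOfFinAddOrder r) (hF : Function.Periodic F r) : F = 0 := by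
  ext t
  by_contra ht
  have hinj : Function.Injective fun n : ℕ => t + n • r :=
    (add_right_injective t).comp (injective_nsmul_iff_not_isOfFinAddOrder.mpr hr)
  refine Set.infinite_of_injective_forall_mem hinj (fun n => ?_) F.support.finite_toSet
  simpa [(hF.nsmul n) t] using ht

namespace SemidirectProduct

variable {N G : Type*} [CommGroup N] [CommGroup G]

def commutatorLeft (φ : G →* MulAut N) (g : G) : N →* N :=
  MonoidHom.mk' (fun n => n⁻¹ * φ g⁻¹ n) fun m n => by
    simp only [map_mul, mul_inv]
    ac_rfl

theorem commutatorLeft_comp_aut (φ : G →* MulAut N) (g h : G) :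
    (commutatorLeft φ g).comp (φ h).toMonoidHom = (φ h).toMonoidHom.comp (commutatorLeft φ g) := by
  ext n
  have hcomm : φ g⁻¹ (φ h n) = φ h (φ g⁻¹ n) := by
    rw [← MulAut.mul_apply, ← map_mul, mul_comm, map_mul, MulAut.mul_apply]
  change (φ h n)⁻¹ * φ g⁻¹ (φ h n) = φ h (n⁻¹ * φ g⁻¹ n)
  rw [map_mul, map_inv (φ h) n, hcomm]

def commutatorMap (φ : G →* MulAut N) (g : G) : N ⋊[φ] G →* N ⋊[φ] G :=
  map (commutatorLeft φ g) (MonoidHom.id G) (commutatorLeft_comp_aut φ g)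

variable {φ : G →* MulAut N}

theorem commutatorMap_inl (g : G) (n : N) :
    commutatorMap φ g (inl n) = (inl n)⁻¹ * (inr g)⁻¹ * inl n * inr g := by
  ext <;> simp [commutatorMap, commutatorLeft]

theorem commutatorMap_inr (g h : G) : commutatorMap φ g (inr h) = inr h := by
  simp [commutatorMap]

theorem commutatorLeft_injective {g : G} (hg : ∀ n, φ g n = n → n = 1) :
    Function.Injective (commutatorLeft φ g) := by
  refine (injective_iff_map_eq_one _).mpr fun n hn => hg n ?_
  have hfix : φ g⁻¹ n = n := (inv_mul_eq_one.mp hn).symm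
  rw [← hfix, ← MulAut.mul_apply, ← map_mul, mul_inv_cancel, map_one, MulAut.one_apply, hfix]

theorem commutatorMap_injective {g : G} (hg : ∀ n, φ g n = n → n = 1) :
    Function.Injective (commutatorMap φ g) := fun x y hxy =>
  SemidirectProduct.ext (commutatorLeft_injective hg (congrArg left hxy))
    (by simpa [commutatorMap] using congrArg right hxy)

end SemidirectProduct

section shiftAut

open Finsupp

variable {T : Type*} [AddCommGroup T]

theorem toAdd_shiftAut_apply (r : Multiplicative T) (f : Multiplicative (T →₀ ℤ)) (t : T) :
    (shiftAut T r f).toAdd t = f.toAdd (t - r.toAdd) := by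
  simp [shiftAut, sub_eq_add_neg]

theorem shiftAut_ofAdd_single (r t : T) (k : ℤ) :
    shiftAut T (ofAdd r) (ofAdd (single t k)) = ofAdd (single (t + r) k) := by
  simp [shiftAut]

theorem eq_one_of_shiftAut_eq {r : T} (hr : ¬IsOfFinAddOrder r) {f : Multiplicative (T →₀ ℤ)}
    (hf : shiftAut T (ofAdd r) f = f) : f = 1 := by
  have hper : Function.Periodic f.toAdd (-r) := fun t => by
    rw [← sub_eq_add_neg, ← toAdd_ofAdd r, ← toAdd_shiftAut_apply, hf]
  exact toAdd.injective (eq_zero_of_periodic (isOfFinAddOrder_neg_iff.not.mpr hr) hper)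

theorem ZW.closure_insert_inl_image_inr_eq_top {S : Set (Multiplicative T)}
    (hS : Subgroup.closure S = ⊤) :
    Subgroup.closure (insert (inl (ofAdd (single 0 1))) (inr '' S) : Set (ZW T)) = ⊤ := by
  set H := Subgroup.closure (insert (inl (ofAdd (single 0 1))) (inr '' S) : Set (ZW T))
  have hinr (g : Multiplicative T) : inr g ∈ H := by
    have : (Subgroup.closure S).map inr ≤ H := by
      rw [MonoidHom.map_closure]
      exact Subgroup.closure_mono (Set.subset_insert _ _)
    exact this ⟨g, hS ▸ Subgroup.mem_top g, rfl⟩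
  have hsingle (t : T) : inl (ofAdd (single t 1)) ∈ H := by
    have hconj := inl_aut (φ := shiftAut T) (ofAdd t) (ofAdd (single 0 1))
    rw [shiftAut_ofAdd_single, zero_add] at hconj
    rw [hconj]
    exact mul_mem (mul_mem (hinr _) (Subgroup.subset_closure (Set.mem_insert _ _))) (hinr _)
  have hinl (f : T →₀ ℤ) : inl (ofAdd f) ∈ H := by
    induction f using Finsupp.induction_linear with
    | zero => simp
    | add f g hf hg => rw [ofAdd_add, map_mul]; exact mul_mem hf hg
    | single t k => rw [← smul_single_one, ofAdd_zsmul, map_zpow]; exact zpow_mem (hsingle t) k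
  rw [Subgroup.eq_top_iff']
  intro x
  rw [← inl_left_mul_inr_right x]
  exact mul_mem (hinl x.left.toAdd) (hinr _)

end shiftAut

theorem closure_ofAdd_basis_eq_top :
    Subgroup.closure {ofAdd ((1 : ℤ), (0 : ℤ)), ofAdd ((0 : ℤ), (1 : ℤ))} =
      (⊤ : Subgroup (Multiplicative (ℤ × ℤ))) := by
  rw [Subgroup.eq_top_iff']
  intro g
  have hg : g = ofAdd ((1 : ℤ), (0 : ℤ)) ^ g.toAdd.1 * ofAdd ((0 : ℤ), (1 : ℤ)) ^ g.toAdd.2 := by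
    apply toAdd.injective
    simp
  rw [hg]
  exact mul_mem (zpow_mem (Subgroup.subset_closure (by simp)) _)
    (zpow_mem (Subgroup.subset_closure (by simp)) _)

theorem genA_eq_inr : genA = inr (ofAdd ((1 : ℤ), (0 : ℤ))) := rfl

theorem genB_eq_inr : genB = inr (ofAdd ((0 : ℤ), (1 : ℤ))) := rfl

theorem genC_eq_inl : genC = inl (ofAdd (Finsupp.single 0 1)) := rfl

/-- In `W = ℤ ≀ ℤ²`, the elements `[c,a] = c⁻¹a⁻¹ca`, `a`, `b` generate a subgroup
isomorphic to `ℤ ≀ ℤ²`. -/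
theorem commutator_a_b_generate_ZW2 :
    Nonempty
      ((Subgroup.closure {genC⁻¹ * genA⁻¹ * genC * genA, genA, genB} : Subgroup ZW2)
        ≃* ZW2) := by
  set Φ := commutatorMap (shiftAut (ℤ × ℤ)) (ofAdd ((1 : ℤ), (0 : ℤ)))
  have hgen := ZW.closure_insert_inl_image_inr_eq_top closure_ofAdd_basis_eq_top
  have hrange : Subgroup.closure {genC⁻¹ * genA⁻¹ * genC * genA, genA, genB} = Φ.range := by
    rw [MonoidHom.range_eq_map, ← hgen, MonoidHom.map_closure]
    simp [Set.image_insert_eq, Φ, commutatorMap_inl, commutatorMap_inr, genA_eq_inr, genB_eq_inr,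
      genC_eq_inl]
  have hinj : Function.Injective Φ := commutatorMap_injective fun f hf =>
    eq_one_of_shiftAut_eq (not_isOfFinAddOrder_of_isAddTorsionFree (by simp)) hf
  exact ⟨(MulEquiv.subgroupCongr hrange).trans (MonoidHom.ofInjective hinj).symm⟩
end

section
/- In ℤ ≀ ℤ², for any nonzero element ω of the base group, the subgroup generated by ω together with the top group ℤ² is isomorphic to ℤ ≀ ℤ². -/
open AddMonoidAlgebra SemidirectProduct

namespace ZW

variable {T : Type*} [AddCommGroup T]

lemma shiftAut_ofAdd_single (g : Multiplicative T) (t : T) (n : ℤ) :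
    shiftAut T g (.ofAdd (Finsupp.single t n)) = .ofAdd (Finsupp.single (t + g.toAdd) n) := by
  simp [shiftAut, Finsupp.domCongr_apply, Finsupp.equivMapDomain_single]

lemma closure_inl_single_zero_union_range_inr :
    Subgroup.closure ({inl (.ofAdd (Finsupp.single 0 1))} ∪ Set.range inr)
      = (⊤ : Subgroup (ZW T)) := by
  set H := Subgroup.closure ({inl (.ofAdd (Finsupp.single 0 1))} ∪ Set.range inr : Set (ZW T))
  have hinr (g : Multiplicative T) : (inr g : ZW T) ∈ H := Subgroup.subset_closure (.inr ⟨g, rfl⟩)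
  have hinl (m : Multiplicative (T →₀ ℤ)) : (inl m : ZW T) ∈ H := by
    induction m using Multiplicative.rec with | ofAdd m => ?_
    induction m using Finsupp.induction_linear with
    | zero => rw [ofAdd_zero, map_one]; exact H.one_mem
    | add f g hf hg => rw [ofAdd_add, map_mul]; exact H.mul_mem hf hg
    | single t n =>
      have hδ : (inl (.ofAdd (Finsupp.single 0 1)) : ZW T) ∈ H := Subgroup.subset_closure (.inl rfl)
      have hsingle : Multiplicative.ofAdd (Finsupp.single t n)
          = shiftAut T (.ofAdd t) (.ofAdd (Finsupp.single 0 1)) ^ n := by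
        rw [shiftAut_ofAdd_single, ← ofAdd_zsmul, Finsupp.smul_single, smul_eq_mul, mul_one,
          zero_add, toAdd_ofAdd]
      rw [hsingle, map_zpow, inl_aut]
      exact H.zpow_mem (H.mul_mem (H.mul_mem (hinr _) hδ) (hinr _)) n
  refine eq_top_iff.2 fun x _ => ?_
  rw [← inl_left_mul_inr_right x]
  exact H.mul_mem (hinl _) (hinr _)

lemma ofCoeff_shiftAut (g : Multiplicative T) (m : Multiplicative (T →₀ ℤ)) :
    ofCoeff (shiftAut T g m).toAdd = single g.toAdd 1 * ofCoeff m.toAdd := by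
  ext t
  rw [coeff_single_mul_apply]
  simp [shiftAut, neg_add_eq_sub, sub_eq_add_neg]

noncomputable def baseMulRight (ω : AddMonoidAlgebra ℤ T) :
    Multiplicative (T →₀ ℤ) →* Multiplicative (T →₀ ℤ) :=
  AddMonoidHom.toMultiplicative <| coeffAddEquiv.toAddMonoidHom.comp <|
    (AddMonoidHom.mulRight ω).comp coeffAddEquiv.symm.toAddMonoidHom

lemma ofCoeff_baseMulRight (ω : AddMonoidAlgebra ℤ T) (m : Multiplicative (T →₀ ℤ)) :
    ofCoeff (baseMulRight ω m).toAdd = ofCoeff m.toAdd * ω :=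
  rfl

lemma baseMulRight_comp_shiftAut (ω : AddMonoidAlgebra ℤ T) (g : Multiplicative T) :
    (baseMulRight ω).comp (shiftAut T g).toMonoidHom
      = (shiftAut T (MonoidHom.id _ g)).toMonoidHom.comp (baseMulRight ω) := by
  refine MonoidHom.ext fun m => ?_
  apply Multiplicative.toAdd.injective
  apply ofCoeff_injective
  simp only [MonoidHom.comp_apply, MulEquiv.coe_toMonoidHom, MonoidHom.id_apply,
    ofCoeff_baseMulRight, ofCoeff_shiftAut, mul_assoc]

noncomputable def wreathMulRight (ω : AddMonoidAlgebra ℤ T) : ZW T →* ZW T :=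
  SemidirectProduct.map (baseMulRight ω) (MonoidHom.id _) (baseMulRight_comp_shiftAut ω)

lemma wreathMulRight_injective {ω : AddMonoidAlgebra ℤ T} (hω : IsRightRegular ω) :
    Function.Injective (wreathMulRight ω) := by
  intro x y hxy
  ext : 1
  · apply Multiplicative.toAdd.injective
    apply ofCoeff_injective
    apply hω
    simp only [← ofCoeff_baseMulRight]
    exact congrArg (fun z : ZW T => ofCoeff z.left.toAdd) hxy
  · exact (congrArg SemidirectProduct.right hxy :)

lemma range_wreathMulRight (ω : Multiplicative (T →₀ ℤ)) :
    (wreathMulRight (ofCoeff ω.toAdd)).range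
      = Subgroup.closure ({inl ω} ∪ Set.range inr : Set (ZW T)) := by
  rw [MonoidHom.range_eq_map, ← closure_inl_single_zero_union_range_inr,
    MonoidHom.map_closure, Set.image_union, Set.image_singleton, ← Set.range_comp]
  -- the top-group part `wreathMulRight _ ∘ inr = inr` holds by `rfl` and is closed by `congr`
  congr 3
  rw [wreathMulRight, map_inl]
  congr 1
  apply Multiplicative.toAdd.injective
  apply ofCoeff_injective
  exact one_mul _

noncomputable def closureInlUnionRangeInrEquiv (ω : Multiplicative (T →₀ ℤ))
    (hω : IsRightRegular (ofCoeff ω.toAdd : AddMonoidAlgebra ℤ T)) :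
    Subgroup.closure ({inl ω} ∪ Set.range inr : Set (ZW T)) ≃* ZW T :=
  (MulEquiv.subgroupCongr (range_wreathMulRight ω).symm).trans
    (MonoidHom.ofInjective (wreathMulRight_injective hω)).symm

end ZW

/-- In `ℤ ≀ ℤ²`, for any nontrivial element `ω` of the base group, the subgroup
generated by `ω` together with the top group `ℤ²` is isomorphic to `ℤ ≀ ℤ²`. -/
theorem base_element_with_top_generates_ZW2
    (ω : Multiplicative ((ℤ × ℤ) →₀ ℤ)) (hω : ω ≠ 1) :
    Nonempty
      ((Subgroup.closure
          ({SemidirectProduct.inl ω} ∪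
            Set.range (SemidirectProduct.inr :
              Multiplicative (ℤ × ℤ) →* ZW2)) : Subgroup ZW2)
        ≃* ZW2) := by
  have hω₀ : (ofCoeff ω.toAdd : AddMonoidAlgebra ℤ (ℤ × ℤ)) ≠ 0 := by
    simpa using hω
  exact ⟨ZW.closureInlUnionRangeInrEquiv ω
    (IsRightCancelMulZero.mul_right_cancel_of_ne_zero hω₀)⟩
end
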